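/- For generic measure-and-prepare instruments 𝔍'_{A₁} and 𝔍'_{A₂} (with arbitrary fixed prepared states), R_I(𝔍'_{A₁}, 𝔍'_{A₂}) = R_M(A₁, A₂). -/

import Mathlib

open Matrix
open scoped Kronecker BigOperators ComplexOrder

noncomputable section

namespace QI

/-- Linear maps between matrix algebras (superoperators). -/
abbrev MatMap (n m : Type*) [Fintype n] [Fintype m] :=
  Matrix n n ℂ →ₗ[ℂ] Matrix m m ℂ

variable {n m m₁ m₂ ι ι₁ ι₂ : Type*}

/-- The Choi matrix of a superoperator. -/
def choi [Fintype n] [DecidableEq n] [Fintype m] (Φ : MatMap n m) :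
    Matrix (n × m) (n × m) ℂ :=
  Matrix.of fun p q => Φ (Matrix.single p.1 q.1 1) p.2 q.2

/-- Complete positivity, via positive semidefiniteness of the Choi matrix. -/
def IsCP [Fintype n] [DecidableEq n] [Fintype m] (Φ : MatMap n m) : Prop :=
  (choi Φ).PosSemidef

/-- Trace preserving map. -/
def IsTP [Fintype n] [Fintype m] (Φ : MatMap n m) : Prop :=
  ∀ ρ, (Φ ρ).trace = ρ.trace

/-- Trace non-increasing map (on positive semidefinite inputs). -/
def IsTNI [Fintype n] [Fintype m] (Φ : MatMap n m) : Prop :=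
  ∀ ρ : Matrix n n ℂ, ρ.PosSemidef → (Φ ρ).trace.re ≤ ρ.trace.re

/-- A quantum channel: CP and trace preserving. -/
def IsChannel [Fintype n] [DecidableEq n] [Fintype m] (Φ : MatMap n m) : Prop :=
  IsCP Φ ∧ IsTP Φ

/-- A quantum instrument: a finite family of CP maps summing to a TP map. -/
structure Instrument (ι n m : Type*) [Fintype ι] [Fintype n] [DecidableEq n] [Fintype m] where
  op : ι → MatMap n m
  cp : ∀ x, IsCP (op x)
  tp : IsTP (∑ x, op x)

/-- Partial trace over the second tensor factor, as a linear map. -/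
def ptrace₂ [Fintype m₁] [Fintype m₂] :
    Matrix (m₁ × m₂) (m₁ × m₂) ℂ →ₗ[ℂ] Matrix m₁ m₁ ℂ where
  toFun M := Matrix.of fun i j => ∑ k, M (i, k) (j, k)
  map_add' M N := by ext i j; simp [Finset.sum_add_distrib]
  map_smul' c M := by ext i j; simp [Finset.mul_sum]

/-- Partial trace over the first tensor factor, as a linear map. -/
def ptrace₁ [Fintype m₁] [Fintype m₂] :
    Matrix (m₁ × m₂) (m₁ × m₂) ℂ →ₗ[ℂ] Matrix m₂ m₂ ℂ where
  toFun M := Matrix.of fun i j => ∑ k, M (k, i) (k, j)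
  map_add' M N := by ext i j; simp [Finset.sum_add_distrib]
  map_smul' c M := by ext i j; simp [Finset.mul_sum]

/-- Parallel compatibility of two instruments. -/
def ParallelCompatible [Fintype ι₁] [Fintype ι₂] [Fintype n] [DecidableEq n]
    [Fintype m₁] [Fintype m₂]
    (I₁ : Instrument ι₁ n m₁) (I₂ : Instrument ι₂ n m₂) : Prop :=
  ∃ J : Instrument (ι₁ × ι₂) n (m₁ × m₂),
    (∀ x, ∑ y, ptrace₂ ∘ₗ J.op (x, y) = I₁.op x) ∧
    (∀ y, ∑ x, ptrace₁ ∘ₗ J.op (x, y) = I₂.op y)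

/-- The dual (Heisenberg picture) of a superoperator, characterized by
`tr[Φ(ρ) M] = tr[ρ Φ*(M)]`. -/
def dualMap [Fintype n] [DecidableEq n] [Fintype m] (Φ : MatMap n m) (M : Matrix m m ℂ) :
    Matrix n n ℂ :=
  Matrix.of fun i j => (Φ (Matrix.single j i 1) * M).trace

/-- A POVM: positive semidefinite effects summing to the identity. -/
def IsPOVM [Fintype n] [DecidableEq n] (A : ι → Matrix n n ℂ) [Fintype ι] : Prop :=
  (∀ x, (A x).PosSemidef) ∧ ∑ x, A x = 1

/-- The POVM induced by an instrument: `A(x) = Φ_x*(𝟙)`. -/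
def inducedPOVM [Fintype ι] [Fintype n] [DecidableEq n] [Fintype m] [DecidableEq m]
    (I : Instrument ι n m) (x : ι) : Matrix n n ℂ :=
  dualMap (I.op x) 1

/-- Compatibility of two POVMs via a joint POVM. -/
def POVMsCompatible [Fintype ι₁] [Fintype ι₂] [Fintype n] [DecidableEq n]
    (A₁ : ι₁ → Matrix n n ℂ) (A₂ : ι₂ → Matrix n n ℂ) : Prop :=
  ∃ G : ι₁ × ι₂ → Matrix n n ℂ, IsPOVM G ∧
    (∀ x, ∑ y, G (x, y) = A₁ x) ∧ (∀ y, ∑ x, G (x, y) = A₂ y)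

/-- Compatibility of two channels via a joint channel. -/
def ChannelsCompatible [Fintype n] [DecidableEq n] [Fintype m₁] [Fintype m₂]
    (Φ₁ : MatMap n m₁) (Φ₂ : MatMap n m₂) : Prop :=
  ∃ Λ : MatMap n (m₁ × m₂), IsChannel Λ ∧
    ptrace₂ ∘ₗ Λ = Φ₁ ∧ ptrace₁ ∘ₗ Λ = Φ₂

/-- Generalized incompatibility robustness of a pair of instruments. -/
def RI [Fintype ι₁] [Fintype ι₂] [Fintype n] [DecidableEq n]
    [Fintype m₁] [Fintype m₂]
    (I₁ : Instrument ι₁ n m₁) (I₂ : Instrument ι₂ n m₂) : ℝ :=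
  sInf {r : ℝ | 0 ≤ r ∧
    ∃ (N₁ : Instrument ι₁ n m₁) (N₂ : Instrument ι₂ n m₂)
      (J : Instrument (ι₁ × ι₂) n (m₁ × m₂)),
      (∀ x, ((1 + r : ℝ) : ℂ)⁻¹ • (I₁.op x + (r : ℂ) • N₁.op x)
          = ∑ y, ptrace₂ ∘ₗ J.op (x, y)) ∧
      (∀ y, ((1 + r : ℝ) : ℂ)⁻¹ • (I₂.op y + (r : ℂ) • N₂.op y)
          = ∑ x, ptrace₁ ∘ₗ J.op (x, y))}

/-- Generalized incompatibility robustness of a pair of POVMs. -/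
def RM [Fintype ι₁] [Fintype ι₂] [Fintype n] [DecidableEq n]
    (A₁ : ι₁ → Matrix n n ℂ) (A₂ : ι₂ → Matrix n n ℂ) : ℝ :=
  sInf {r : ℝ | 0 ≤ r ∧
    ∃ (B₁ : ι₁ → Matrix n n ℂ) (B₂ : ι₂ → Matrix n n ℂ) (G : ι₁ × ι₂ → Matrix n n ℂ),
      IsPOVM B₁ ∧ IsPOVM B₂ ∧ (∀ p, (G p).PosSemidef) ∧
      (∀ x, ((1 + r : ℝ) : ℂ)⁻¹ • (A₁ x + (r : ℂ) • B₁ x) = ∑ y, G (x, y)) ∧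
      (∀ y, ((1 + r : ℝ) : ℂ)⁻¹ • (A₂ y + (r : ℂ) • B₂ y) = ∑ x, G (x, y))}

/-- Generalized incompatibility robustness of a pair of channels. -/
def RC [Fintype n] [DecidableEq n] [Fintype m₁] [Fintype m₂]
    (Φ₁ : MatMap n m₁) (Φ₂ : MatMap n m₂) : ℝ :=
  sInf {r : ℝ | 0 ≤ r ∧
    ∃ (N₁ : MatMap n m₁) (N₂ : MatMap n m₂) (Λ : MatMap n (m₁ × m₂)),
      IsChannel N₁ ∧ IsChannel N₂ ∧ IsChannel Λ ∧
      ((1 + r : ℝ) : ℂ)⁻¹ • (Φ₁ + (r : ℂ) • N₁) = ptrace₂ ∘ₗ Λ ∧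
      ((1 + r : ℝ) : ℂ)⁻¹ • (Φ₂ + (r : ℂ) • N₂) = ptrace₁ ∘ₗ Λ}

/-- Post-processing relation on instruments: `I₂ ≲ I₁`. -/
def PostProcessingOf [Fintype ι₁] [Fintype ι₂] [Fintype n] [DecidableEq n]
    [Fintype m₁] [DecidableEq m₁] [Fintype m₂]
    (I₂ : Instrument ι₂ n m₂) (I₁ : Instrument ι₁ n m₁) : Prop :=
  ∃ R : ι₁ → Instrument ι₂ m₁ m₂,
    ∀ y, I₂.op y = ∑ x, (R x).op y ∘ₗ I₁.op x

/-- A density matrix (quantum state). -/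
def IsState [Fintype m] (η : Matrix m m ℂ) : Prop :=
  η.PosSemidef ∧ η.trace = 1

/-- A pure state. -/
def IsPureState [Fintype m] (η : Matrix m m ℂ) : Prop :=
  ∃ v : m → ℂ, (∑ i, star (v i) * v i) = 1 ∧ η = Matrix.vecMulVec v (star v)

/-- The trash-and-prepare map `ρ ↦ tr(ρ) • η`. -/
def trashPrep [Fintype n] [Fintype m] (η : Matrix m m ℂ) : MatMap n m :=
  (Matrix.traceLinearMap n ℂ ℂ).smulRight η

/-- Tensoring with a fixed matrix on the right, as a linear map. -/
def kronRight [Fintype m₁] [Fintype m₂] (B : Matrix m₂ m₂ ℂ) :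
    Matrix m₁ m₁ ℂ →ₗ[ℂ] Matrix (m₁ × m₂) (m₁ × m₂) ℂ where
  toFun A := A ⊗ₖ B
  map_add' A A' := by ext ⟨i, k⟩ ⟨j, l⟩; simp [Matrix.kroneckerMap_apply, add_mul]
  map_smul' c A := by ext ⟨i, k⟩ ⟨j, l⟩; simp [Matrix.kroneckerMap_apply, mul_assoc]

/-- Tensoring with a fixed matrix on the left, as a linear map. -/
def kronLeft [Fintype m₁] [Fintype m₂] (A : Matrix m₁ m₁ ℂ) :
    Matrix m₂ m₂ ℂ →ₗ[ℂ] Matrix (m₁ × m₂) (m₁ × m₂) ℂ where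
  toFun B := A ⊗ₖ B
  map_add' B B' := by ext ⟨i, k⟩ ⟨j, l⟩; simp [Matrix.kroneckerMap_apply, mul_add]
  map_smul' c B := by
    ext ⟨i, k⟩ ⟨j, l⟩
    simp only [Matrix.kroneckerMap_apply, Matrix.smul_apply, smul_eq_mul, RingHom.id_apply]
    ring

/-- Measure-and-prepare operation: `ρ ↦ tr(ρ A) • σ`. -/
def mpOp [Fintype n] [Fintype m] (A : Matrix n n ℂ) (σ : Matrix m m ℂ) : MatMap n m where
  toFun ρ := (ρ * A).trace • σ
  map_add' ρ ρ' := by simp [Matrix.add_mul, Matrix.trace_add, add_smul]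
  map_smul' c ρ := by simp [Matrix.smul_mul, Matrix.trace_smul, smul_smul]

/-- Conjugation by a Kraus operator: `ρ ↦ K ρ K†`. -/
def krausOp [Fintype n] [Fintype m] (K : Matrix m n ℂ) : MatMap n m where
  toFun ρ := K * ρ * Kᴴ
  map_add' ρ ρ' := by simp [Matrix.mul_add, Matrix.add_mul]
  map_smul' c ρ := by simp [Matrix.mul_smul, Matrix.smul_mul]

end QI

end

/-!
The map `Φ ↦ Φ*(𝟙)` sending an operation to its effect is linear, positive on completely
positive maps, sends trace-preserving maps to `𝟙`, and is unchanged by composing with a partial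
trace. Pushing a witness of the instrument robustness forward along it therefore gives a witness
of the POVM robustness of the induced POVMs, which for `𝔍'_{A₁}`, `𝔍'_{A₂}` are `A₁`, `A₂`.
Conversely, from noisy POVMs with a joint POVM `G`, measuring `G` and preparing `ρ₁ x ⊗ ρ₂ y` is
a joint instrument for the correspondingly noisy measure-and-prepare instruments. Hence both
robustnesses are infima of the same set.
-/

noncomputable section

namespace QI

variable {ι ι₁ ι₂ n m m₁ m₂ : Type*}

section PartialTrace

variable [Fintype m₁] [Fintype m₂]

lemma ptrace₂_apply (M : Matrix (m₁ × m₂) (m₁ × m₂) ℂ) (i j : m₁) :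
    ptrace₂ M i j = ∑ k, M (i, k) (j, k) := rfl

lemma ptrace₁_apply (M : Matrix (m₁ × m₂) (m₁ × m₂) ℂ) (i j : m₂) :
    ptrace₁ M i j = ∑ k, M (k, i) (k, j) := rfl

lemma ptrace₂_eq_sum_submatrix (M : Matrix (m₁ × m₂) (m₁ × m₂) ℂ) :
    ptrace₂ M = ∑ k, M.submatrix (·, k) (·, k) := by
  ext i j
  simp [ptrace₂_apply, Matrix.sum_apply]

lemma _root_.Matrix.PosSemidef.ptrace₂ {M : Matrix (m₁ × m₂) (m₁ × m₂) ℂ}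
    (hM : M.PosSemidef) : (ptrace₂ M).PosSemidef := by
  rw [ptrace₂_eq_sum_submatrix]
  exact posSemidef_sum _ fun k _ => hM.submatrix _

lemma trace_ptrace₂ (M : Matrix (m₁ × m₂) (m₁ × m₂) ℂ) : (ptrace₂ M).trace = M.trace := by
  simp [Matrix.trace, ptrace₂_apply, Fintype.sum_prod_type]

lemma trace_ptrace₁ (M : Matrix (m₁ × m₂) (m₁ × m₂) ℂ) : (ptrace₁ M).trace = M.trace := by
  simp only [Matrix.trace, diag_apply, ptrace₁_apply, Fintype.sum_prod_type]
  exact Finset.sum_comm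

lemma ptrace₂_kronecker (σ₁ : Matrix m₁ m₁ ℂ) (σ₂ : Matrix m₂ m₂ ℂ) :
    ptrace₂ (σ₁ ⊗ₖ σ₂) = σ₂.trace • σ₁ := by
  ext i j
  simp [ptrace₂_apply, Matrix.trace, ← Finset.mul_sum, mul_comm]

lemma ptrace₁_kronecker (σ₁ : Matrix m₁ m₁ ℂ) (σ₂ : Matrix m₂ m₂ ℂ) :
    ptrace₁ (σ₁ ⊗ₖ σ₂) = σ₁.trace • σ₂ := by
  ext i j
  simp [ptrace₁_apply, Matrix.trace, ← Finset.sum_mul]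

end PartialTrace

section Effect

variable [Fintype n] [DecidableEq n] [Fintype m]

/-- `Φ ↦ dualMap Φ 1`, bundled as a linear map. -/
def effect : MatMap n m →ₗ[ℂ] Matrix n n ℂ where
  toFun Φ := Matrix.of fun i j => (Φ (Matrix.single j i 1)).trace
  map_add' Φ Ψ := by ext i j; simp [Matrix.trace_add]
  map_smul' c Φ := by ext i j; simp [Matrix.trace_smul]

lemma effect_apply (Φ : MatMap n m) (i j : n) :
    effect Φ i j = (Φ (Matrix.single j i 1)).trace := rfl

lemma effect_eq_transpose_ptrace₂_choi (Φ : MatMap n m) :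
    effect Φ = (ptrace₂ (choi Φ))ᵀ := by
  ext i j
  simp [effect_apply, ptrace₂_apply, choi, Matrix.trace]

lemma IsCP.effect_posSemidef {Φ : MatMap n m} (hΦ : IsCP Φ) : (effect Φ).PosSemidef := by
  rw [effect_eq_transpose_ptrace₂_choi]
  exact hΦ.ptrace₂.transpose

lemma IsTP.effect_eq_one {Φ : MatMap n m} (hΦ : IsTP Φ) : effect Φ = 1 := by
  ext i j
  rw [effect_apply, hΦ, one_apply]
  split_ifs with h
  · subst h
    exact trace_single_eq_same _ _
  · exact trace_single_eq_of_ne _ _ _ (Ne.symm h)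

lemma Instrument.isPOVM_effect [Fintype ι] (I : Instrument ι n m) :
    IsPOVM fun x => effect (I.op x) :=
  ⟨fun x => (I.cp x).effect_posSemidef, by rw [← map_sum]; exact I.tp.effect_eq_one⟩

lemma effect_ptrace₂_comp [Fintype m₁] [Fintype m₂] (Φ : MatMap n (m₁ × m₂)) :
    effect (ptrace₂ ∘ₗ Φ) = effect Φ := by
  ext i j
  simp [effect_apply, trace_ptrace₂]

lemma effect_ptrace₁_comp [Fintype m₁] [Fintype m₂] (Φ : MatMap n (m₁ × m₂)) :
    effect (ptrace₁ ∘ₗ Φ) = effect Φ := by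
  ext i j
  simp [effect_apply, trace_ptrace₁]

lemma effect_mpOp (A : Matrix n n ℂ) (σ : Matrix m m ℂ) : effect (mpOp A σ) = σ.trace • A := by
  ext i j
  simp [effect_apply, mpOp, Matrix.trace_smul, trace_single_mul, mul_comm]

end Effect

section MeasurePrepare

variable [Fintype n] [Fintype m]

lemma mpOp_apply (A : Matrix n n ℂ) (σ : Matrix m m ℂ) (ρ : Matrix n n ℂ) :
    mpOp A σ ρ = (ρ * A).trace • σ := rfl

def mpOpₗ (σ : Matrix m m ℂ) : Matrix n n ℂ →ₗ[ℂ] MatMap n m where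
  toFun A := mpOp A σ
  map_add' A B := by ext1 ρ; simp [mpOp_apply, Matrix.mul_add, Matrix.trace_add, add_smul]
  map_smul' c A := by ext1 ρ; simp [mpOp_apply, Matrix.trace_smul, smul_smul]

lemma mpOpₗ_apply (σ : Matrix m m ℂ) (A : Matrix n n ℂ) : mpOpₗ σ A = mpOp A σ := rfl

lemma choi_mpOp [DecidableEq n] (A : Matrix n n ℂ) (σ : Matrix m m ℂ) :
    choi (mpOp A σ) = Aᵀ ⊗ₖ σ := by
  ext ⟨i, k⟩ ⟨j, l⟩
  simp [choi, mpOp_apply, trace_single_mul]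

lemma isCP_mpOp [DecidableEq n] {A : Matrix n n ℂ} {σ : Matrix m m ℂ}
    (hA : A.PosSemidef) (hσ : σ.PosSemidef) : IsCP (mpOp A σ) := by
  rw [IsCP, choi_mpOp]
  exact hA.transpose.kronecker hσ

lemma isTP_sum_mpOp [Fintype ι] [DecidableEq n] {A : ι → Matrix n n ℂ} {σ : ι → Matrix m m ℂ}
    (hA : ∑ x, A x = 1) (hσ : ∀ x, (σ x).trace = 1) : IsTP (∑ x, mpOp (A x) (σ x)) := by
  intro ρ
  simp only [LinearMap.sum_apply, mpOp_apply, trace_sum, trace_smul, hσ, smul_eq_mul, mul_one]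
  rw [← trace_sum, ← Matrix.mul_sum, hA, mul_one]

def mpInstrument [Fintype ι] [DecidableEq n] (A : ι → Matrix n n ℂ) (σ : ι → Matrix m m ℂ)
    (hA : IsPOVM A) (hσ : ∀ x, IsState (σ x)) : Instrument ι n m where
  op x := mpOp (A x) (σ x)
  cp x := isCP_mpOp (hA.1 x) (hσ x).1
  tp := isTP_sum_mpOp hA.2 fun x => (hσ x).2

lemma ptrace₂_comp_mpOp_kronecker [Fintype m₁] [Fintype m₂] (A : Matrix n n ℂ)
    (σ₁ : Matrix m₁ m₁ ℂ) {σ₂ : Matrix m₂ m₂ ℂ} (hσ₂ : σ₂.trace = 1) :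
    ptrace₂ ∘ₗ mpOp A (σ₁ ⊗ₖ σ₂) = mpOp A σ₁ := by
  ext1 ρ
  simp [mpOp_apply, ptrace₂_kronecker, hσ₂]

lemma ptrace₁_comp_mpOp_kronecker [Fintype m₁] [Fintype m₂] (A : Matrix n n ℂ)
    {σ₁ : Matrix m₁ m₁ ℂ} (σ₂ : Matrix m₂ m₂ ℂ) (hσ₁ : σ₁.trace = 1) :
    ptrace₁ ∘ₗ mpOp A (σ₁ ⊗ₖ σ₂) = mpOp A σ₂ := by
  ext1 ρ
  simp [mpOp_apply, ptrace₁_kronecker, hσ₁]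

lemma effect_op_eq_of_measurePrepare [Fintype ι] [DecidableEq n] {A : ι → Matrix n n ℂ}
    {σ : ι → Matrix m m ℂ} (hσ : ∀ x, (σ x).trace = 1) {S : Instrument ι n m}
    (hS : ∀ x, S.op x = mpOp (A x) (σ x)) : (fun x => effect (S.op x)) = A := by
  ext1 x
  rw [hS, effect_mpOp, hσ, one_smul]

end MeasurePrepare

lemma IsState.kronecker [Fintype m₁] [Fintype m₂] {σ₁ : Matrix m₁ m₁ ℂ} {σ₂ : Matrix m₂ m₂ ℂ}
    (h₁ : IsState σ₁) (h₂ : IsState σ₂) : IsState (σ₁ ⊗ₖ σ₂) :=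
  ⟨h₁.1.kronecker h₂.1, by rw [trace_kronecker, h₁.2, h₂.2, mul_one]⟩

lemma sum_eq_one_of_noisy_marginals [Fintype ι₁] [Fintype ι₂] [Fintype n] [DecidableEq n]
    {A B : ι₁ → Matrix n n ℂ} {G : ι₁ × ι₂ → Matrix n n ℂ}
    {r : ℝ} (hr : 0 ≤ r) (hA : ∑ x, A x = 1) (hB : ∑ x, B x = 1)
    (hG : ∀ x, ((1 + r : ℝ) : ℂ)⁻¹ • (A x + (r : ℂ) • B x) = ∑ y, G (x, y)) :
    ∑ p, G p = 1 := by
  have hc : ((1 + r : ℝ) : ℂ) ≠ 0 := by exact_mod_cast (by linarith : 1 + r ≠ 0)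
  calc ∑ p, G p = ∑ x, ((1 + r : ℝ) : ℂ)⁻¹ • (A x + (r : ℂ) • B x) := by
        rw [Fintype.sum_prod_type]
        simp only [hG]
    _ = ((1 + r : ℝ) : ℂ)⁻¹ • ((1 + r : ℝ) : ℂ) • (1 : Matrix n n ℂ) := by
        rw [← Finset.smul_sum, Finset.sum_add_distrib, ← Finset.smul_sum, hA, hB]
        push_cast
        rw [add_smul, one_smul]
    _ = 1 := by rw [smul_smul, inv_mul_cancel₀ hc, one_smul]

section Robustness

variable [Fintype ι₁] [Fintype ι₂] [Fintype n] [DecidableEq n] [Fintype m₁] [Fintype m₂]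

def riSet (I₁ : Instrument ι₁ n m₁) (I₂ : Instrument ι₂ n m₂) : Set ℝ :=
  {r : ℝ | 0 ≤ r ∧
    ∃ (N₁ : Instrument ι₁ n m₁) (N₂ : Instrument ι₂ n m₂)
      (J : Instrument (ι₁ × ι₂) n (m₁ × m₂)),
      (∀ x, ((1 + r : ℝ) : ℂ)⁻¹ • (I₁.op x + (r : ℂ) • N₁.op x)
          = ∑ y, ptrace₂ ∘ₗ J.op (x, y)) ∧
      (∀ y, ((1 + r : ℝ) : ℂ)⁻¹ • (I₂.op y + (r : ℂ) • N₂.op y)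
          = ∑ x, ptrace₁ ∘ₗ J.op (x, y))}

def rmSet (A₁ : ι₁ → Matrix n n ℂ) (A₂ : ι₂ → Matrix n n ℂ) : Set ℝ :=
  {r : ℝ | 0 ≤ r ∧
    ∃ (B₁ : ι₁ → Matrix n n ℂ) (B₂ : ι₂ → Matrix n n ℂ) (G : ι₁ × ι₂ → Matrix n n ℂ),
      IsPOVM B₁ ∧ IsPOVM B₂ ∧ (∀ p, (G p).PosSemidef) ∧
      (∀ x, ((1 + r : ℝ) : ℂ)⁻¹ • (A₁ x + (r : ℂ) • B₁ x) = ∑ y, G (x, y)) ∧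
      (∀ y, ((1 + r : ℝ) : ℂ)⁻¹ • (A₂ y + (r : ℂ) • B₂ y) = ∑ x, G (x, y))}

lemma RI_eq_sInf_riSet (I₁ : Instrument ι₁ n m₁) (I₂ : Instrument ι₂ n m₂) :
    RI I₁ I₂ = sInf (riSet I₁ I₂) := rfl

lemma RM_eq_sInf_rmSet (A₁ : ι₁ → Matrix n n ℂ) (A₂ : ι₂ → Matrix n n ℂ) :
    RM A₁ A₂ = sInf (rmSet A₁ A₂) := rfl

lemma riSet_subset_rmSet_effect (I₁ : Instrument ι₁ n m₁) (I₂ : Instrument ι₂ n m₂) :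
    riSet I₁ I₂ ⊆ rmSet (fun x => effect (I₁.op x)) (fun y => effect (I₂.op y)) := by
  rintro r ⟨hr, N₁, N₂, J, h₁, h₂⟩
  refine ⟨hr, fun x => effect (N₁.op x), fun y => effect (N₂.op y), fun p => effect (J.op p),
    N₁.isPOVM_effect, N₂.isPOVM_effect, fun p => (J.cp p).effect_posSemidef, fun x => ?_,
    fun y => ?_⟩
  · simpa only [map_smul, map_add, map_sum, effect_ptrace₂_comp] using congrArg effect (h₁ x)
  · simpa only [map_smul, map_add, map_sum, effect_ptrace₁_comp] using congrArg effect (h₂ y)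

lemma rmSet_subset_riSet_measurePrepare {A₁ : ι₁ → Matrix n n ℂ} {A₂ : ι₂ → Matrix n n ℂ}
    {ρ₁ : ι₁ → Matrix m₁ m₁ ℂ} {ρ₂ : ι₂ → Matrix m₂ m₂ ℂ} (hρ₁ : ∀ x, IsState (ρ₁ x))
    (hρ₂ : ∀ y, IsState (ρ₂ y)) {S₁ : Instrument ι₁ n m₁} {S₂ : Instrument ι₂ n m₂}
    (hS₁ : ∀ x, S₁.op x = mpOp (A₁ x) (ρ₁ x)) (hS₂ : ∀ y, S₂.op y = mpOp (A₂ y) (ρ₂ y)) :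
    rmSet A₁ A₂ ⊆ riSet S₁ S₂ := by
  rintro r ⟨hr, B₁, B₂, G, hB₁, hB₂, hG, g₁, g₂⟩
  have hA₁ : IsPOVM A₁ := effect_op_eq_of_measurePrepare (fun x => (hρ₁ x).2) hS₁ ▸
    S₁.isPOVM_effect
  let J := mpInstrument G (fun p => ρ₁ p.1 ⊗ₖ ρ₂ p.2)
    ⟨hG, sum_eq_one_of_noisy_marginals hr hA₁.2 hB₁.2 g₁⟩ fun p => (hρ₁ p.1).kronecker (hρ₂ p.2)
  refine ⟨hr, mpInstrument B₁ ρ₁ hB₁ hρ₁, mpInstrument B₂ ρ₂ hB₂ hρ₂, J, fun x => ?_, fun y => ?_⟩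
  · simp only [J, mpInstrument, hS₁, ptrace₂_comp_mpOp_kronecker _ _ (hρ₂ _).2]
    simp only [← mpOpₗ_apply, ← map_sum, ← g₁, map_smul, map_add]
  · simp only [J, mpInstrument, hS₂, ptrace₁_comp_mpOp_kronecker _ _ (hρ₁ _).2]
    simp only [← mpOpₗ_apply, ← map_sum, ← g₂, map_smul, map_add]

end Robustness

end QI

end

open QI in
theorem RI_eq_RM_measure_prepare_general {ι₁ ι₂ n m₁ m₂ : Type*}
    [Fintype ι₁] [Fintype ι₂] [Fintype n] [DecidableEq n] [Fintype m₁] [Fintype m₂]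
    (A₁ : ι₁ → Matrix n n ℂ) (A₂ : ι₂ → Matrix n n ℂ)
    (ρ₁ : ι₁ → Matrix m₁ m₁ ℂ) (hρ₁ : ∀ x, IsState (ρ₁ x))
    (ρ₂ : ι₂ → Matrix m₂ m₂ ℂ) (hρ₂ : ∀ y, IsState (ρ₂ y))
    (S₁ : Instrument ι₁ n m₁) (hS₁ : ∀ x, S₁.op x = mpOp (A₁ x) (ρ₁ x))
    (S₂ : Instrument ι₂ n m₂) (hS₂ : ∀ y, S₂.op y = mpOp (A₂ y) (ρ₂ y)) :
    RI S₁ S₂ = RM A₁ A₂ := by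
  have hE₁ := effect_op_eq_of_measurePrepare (fun x => (hρ₁ x).2) hS₁
  have hE₂ := effect_op_eq_of_measurePrepare (fun y => (hρ₂ y).2) hS₂
  rw [RI_eq_sInf_riSet, RM_eq_sInf_rmSet]
  congr 1
  refine Set.Subset.antisymm ?_ (rmSet_subset_riSet_measurePrepare hρ₁ hρ₂ hS₁ hS₂)
  simpa only [hE₁, hE₂] using riSet_subset_rmSet_effect S₁ S₂

open QI in
/-- for generic measure-and-prepare instruments, `R_I = R_M`. -/
theorem RI_eq_RM_measure_prepare {ι₁ ι₂ n m₁ m₂ : Type*}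
    [Fintype ι₁] [Fintype ι₂] [Fintype n] [DecidableEq n] [Fintype m₁] [Fintype m₂]
    (A₁ : ι₁ → Matrix n n ℂ) (A₂ : ι₂ → Matrix n n ℂ)
    (hA₁ : IsPOVM A₁) (hA₂ : IsPOVM A₂)
    (ρ₁ : ι₁ → Matrix m₁ m₁ ℂ) (hρ₁ : ∀ x, IsState (ρ₁ x))
    (ρ₂ : ι₂ → Matrix m₂ m₂ ℂ) (hρ₂ : ∀ y, IsState (ρ₂ y))
    (S₁ : Instrument ι₁ n m₁) (hS₁ : ∀ x, S₁.op x = mpOp (A₁ x) (ρ₁ x))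
    (S₂ : Instrument ι₂ n m₂) (hS₂ : ∀ y, S₂.op y = mpOp (A₂ y) (ρ₂ y)) :
    RI S₁ S₂ = RM A₁ A₂ :=
  RI_eq_RM_measure_prepare_general A₁ A₂ ρ₁ hρ₁ ρ₂ hρ₂ S₁ hS₁ S₂ hS₂
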